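/- For every m ∈ ℕ, the ℂ-vector space H_m = {P ∈ Pol : P is homogeneous of degree m and Δ P = 0} of harmonic m-homogeneous polynomials has dimension (m+1)(m+2)²(m+3)/12. -/

import Mathlib

open MvPolynomial

/-- The six index pairs `(a,b)` with `a < b`: the variables `z^{ab}`. -/
abbrev Idx : Type := {p : Fin 4 × Fin 4 // p.1 < p.2}

/-- `Pol = ℂ[z^{12}, z^{13}, z^{14}, z^{23}, z^{24}, z^{34}]`. -/
abbrev Pol : Type := MvPolynomial Idx ℂ

/-- The generic antisymmetric matrix of variables: `Z a b = z^{ab}`,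
extended by `z^{ba} = -z^{ab}` and `z^{aa} = 0`. -/
noncomputable def Z (a b : Fin 4) : Pol :=
  if h : a < b then X ⟨(a, b), h⟩
  else if h' : b < a then -X ⟨(b, a), h'⟩
  else 0

/-- `eps a b c d` is the sign of `(a,b,c,d)` as a permutation of `(0,1,2,3)`,
and `0` if two indices coincide (via the Vandermonde product formula). -/
noncomputable def eps (a b c d : Fin 4) : ℂ :=
  ((((b.val : ℤ) - a.val) * ((c.val : ℤ) - a.val) * ((d.val : ℤ) - a.val) *
      ((c.val : ℤ) - b.val) * ((d.val : ℤ) - b.val) * ((d.val : ℤ) - c.val) : ℤ) : ℂ) / 12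

/-- The lowered variables `z_{ab} = (1/2) ∑_{c,d} ε_{abcd} z^{cd}`. -/
noncomputable def Zlow (a b : Fin 4) : Pol :=
  (1 / 2 : ℂ) • ∑ c, ∑ d, eps a b c d • Z c d

/-- The partial derivative `∂_{ab}` with respect to `z^{ab}` (for `a < b`),
extended by `∂_{ba} = -∂_{ab}` and `∂_{aa} = 0`. -/
noncomputable def D (a b : Fin 4) : Pol →ₗ[ℂ] Pol :=
  if h : a < b then (pderiv ⟨(a, b), h⟩).toLinearMap
  else if h' : b < a then -(pderiv ⟨(b, a), h'⟩).toLinearMap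
  else 0

/-- The raised derivative `∂^{ab} = (1/2) ∑_{c,d} ε^{abcd} ∂_{cd}`. -/
noncomputable def Dup (a b : Fin 4) : Pol →ₗ[ℂ] Pol :=
  (1 / 2 : ℂ) • ∑ c, ∑ d, eps a b c d • D c d

/-- The Laplacian `Δ = 2(∂₁₂∂₃₄ − ∂₁₃∂₂₄ + ∂₁₄∂₂₃)`. -/
noncomputable def Lap : Pol →ₗ[ℂ] Pol :=
  (2 : ℂ) • (D 0 1 ∘ₗ D 2 3 - D 0 2 ∘ₗ D 1 3 + D 0 3 ∘ₗ D 1 2)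

/-- The squared radius `r² = 2(z¹²z³⁴ − z¹³z²⁴ + z¹⁴z²³)`. -/
noncomputable def r2 : Pol :=
  (2 : ℂ) • (Z 0 1 * Z 2 3 - Z 0 2 * Z 1 3 + Z 0 3 * Z 1 2)

/-- The space `H_m` of harmonic `m`-homogeneous polynomials in `Pol`. -/
noncomputable def Hm (m : ℕ) : Submodule ℂ Pol :=
  homogeneousSubmodule Idx ℂ m ⊓ LinearMap.ker Lap

/-!
The Fischer form `⟨p, q⟩ = ∑_d d! p_d q_d` makes `∂_i` adjoint to multiplication by `X i`,
hence `Δ` adjoint to multiplication by `r²`. The form is nondegenerate on each space of forms of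
fixed degree and `r²` is not a zero divisor, so `Δ` maps forms of degree `m + 2` onto forms of
degree `m`. Hence `dim H_{m+2} = C(m+7, 5) - C(m+5, 5)`, the difference of the dimensions of the
spaces of forms of degree `m + 2` and `m` in six variables; in degrees `0` and `1` every form is
harmonic.
-/

namespace Finsupp

variable {σ : Type*}

def factorial (d : σ →₀ ℕ) : ℕ := d.prod fun _ n => n.factorial

lemma factorial_ne_zero (d : σ →₀ ℕ) : d.factorial ≠ 0 :=
  Finset.prod_ne_zero_iff.mpr fun _ _ => Nat.factorial_ne_zero _

lemma factorial_add_single (d : σ →₀ ℕ) (i : σ) :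
    (d + single i 1).factorial = (d i + 1) * d.factorial := by
  classical
  have herase : (d + single i 1).erase i = d.erase i := by
    ext j
    rcases eq_or_ne j i with rfl | hj
    · simp
    · simp [erase_ne hj]
  rw [factorial, factorial, ← mul_prod_erase' _ i _ fun _ => Nat.factorial_zero,
    ← mul_prod_erase' d i _ fun _ => Nat.factorial_zero, herase, add_apply, single_eq_same,
    Nat.factorial_succ, mul_assoc]

end Finsupp

namespace MvPolynomial

lemma pderiv_eq_zero_of_isHomogeneous_zero {σ R : Type*} [CommSemiring R] {p : MvPolynomial σ R}
    (i : σ) (hp : p.IsHomogeneous 0) : pderiv i p = 0 := by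
  rw [← totalDegree_zero_iff_isHomogeneous, totalDegree_eq_zero_iff_eq_C] at hp
  rw [hp, pderiv_C]

section Fischer

variable {σ R : Type*} [CommSemiring R]

private lemma sum_support_mul_coeff_eq {p : MvPolynomial σ R} {s : Finset (σ →₀ ℕ)}
    (hs : p.support ⊆ s) (w : (σ →₀ ℕ) → R) (q : MvPolynomial σ R) :
    ∑ d ∈ p.support, w d * coeff d p * coeff d q = ∑ d ∈ s, w d * coeff d p * coeff d q :=
  Finset.sum_subset hs fun d _ hd => by rw [notMem_support_iff.mp hd, mul_zero, zero_mul]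

noncomputable def fischerForm : LinearMap.BilinForm R (MvPolynomial σ R) :=
  LinearMap.mk₂ R (fun p q => ∑ d ∈ p.support, (d.factorial : R) * coeff d p * coeff d q)
    (fun p p' q => by
      classical
      rw [sum_support_mul_coeff_eq (s := p.support ∪ p'.support) support_add,
        sum_support_mul_coeff_eq (s := p.support ∪ p'.support) Finset.subset_union_left,
        sum_support_mul_coeff_eq (s := p.support ∪ p'.support) Finset.subset_union_right,
        ← Finset.sum_add_distrib]
      simp only [coeff_add, mul_add, add_mul])
    (fun c p q => by
      rw [sum_support_mul_coeff_eq support_smul, smul_eq_mul, Finset.mul_sum]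
      simp only [coeff_smul, smul_eq_mul]
      exact Finset.sum_congr rfl fun _ _ => by ring)
    (fun p q q' => by simp only [coeff_add, mul_add, Finset.sum_add_distrib])
    (fun c p q => by
      simp only [coeff_smul, smul_eq_mul, Finset.mul_sum]
      exact Finset.sum_congr rfl fun _ _ => by ring)

lemma fischerForm_apply_of_support_subset {p : MvPolynomial σ R} {s : Finset (σ →₀ ℕ)}
    (hs : p.support ⊆ s) (q : MvPolynomial σ R) :
    fischerForm p q = ∑ d ∈ s, (d.factorial : R) * coeff d p * coeff d q :=
  sum_support_mul_coeff_eq hs _ q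

lemma fischerForm_comm (p q : MvPolynomial σ R) : fischerForm p q = fischerForm q p := by
  classical
  rw [fischerForm_apply_of_support_subset (Finset.subset_union_left (s₂ := q.support)),
    fischerForm_apply_of_support_subset (Finset.subset_union_right (s₁ := p.support))]
  exact Finset.sum_congr rfl fun _ _ => by ring

lemma fischerForm_monomial_left (d : σ →₀ ℕ) (a : R) (q : MvPolynomial σ R) :
    fischerForm (monomial d a) q = d.factorial * a * coeff d q := by
  classical
  rw [fischerForm_apply_of_support_subset support_monomial_subset, Finset.sum_singleton,
    coeff_monomial, if_pos rfl]

lemma fischerForm_X_mul (i : σ) (p q : MvPolynomial σ R) :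
    fischerForm (X i * p) q = fischerForm p (pderiv i q) := by
  induction p using MvPolynomial.induction_on' with
  | add p p' hp hp' => rw [mul_add, map_add, map_add, LinearMap.add_apply, LinearMap.add_apply,
      hp, hp']
  | monomial d a =>
    rw [X, monomial_mul, one_mul, add_comm, fischerForm_monomial_left, fischerForm_monomial_left,
      coeff_pderiv, Finsupp.factorial_add_single]
    push_cast
    ring

lemma fischerForm_pderiv (i : σ) (p q : MvPolynomial σ R) :
    fischerForm (pderiv i p) q = fischerForm p (X i * q) := by
  rw [fischerForm_comm, ← fischerForm_X_mul, fischerForm_comm]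

end Fischer

section Field

variable {σ K : Type*} [Field K]

lemma fischerForm_restrict_homogeneous_nondegenerate [CharZero K] (n : ℕ) :
    (fischerForm.restrict (homogeneousSubmodule σ K n)).Nondegenerate := by
  refine (LinearMap.IsRefl.nondegenerate_iff_separatingLeft fun p q h => ?_).mpr fun q hq => ?_
  · simpa only [LinearMap.BilinForm.restrict_apply, LinearMap.domRestrict_apply,
      fischerForm_comm (q : MvPolynomial σ K)] using h
  · ext d
    by_cases hd : d.degree = n
    · have := hq ⟨monomial d 1, isHomogeneous_monomial 1 hd⟩
      rw [LinearMap.BilinForm.restrict_apply, LinearMap.domRestrict_apply, fischerForm_comm,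
        fischerForm_monomial_left, mul_one] at this
      simpa [Finsupp.factorial_ne_zero] using this
    · exact q.2.coeff_eq_zero hd

variable [Fintype σ]

instance (n : ℕ) : FiniteDimensional K (homogeneousSubmodule σ K n) :=
  Module.Finite.iff_fg.mpr (homogeneousSubmodule_fg σ K n)

lemma finrank_homogeneousSubmodule (n : ℕ) :
    Module.finrank K (homogeneousSubmodule σ K n) = (Fintype.card σ).multichoose n := by
  classical
  let e : {d : σ →₀ ℕ | d.degree = n} ≃ {d : σ →₀ ℕ // d.sum (fun _ => id) = n} :=
    Equiv.subtypeEquivRight fun _ => Iff.rfl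
  have : Fintype {d : σ →₀ ℕ | d.degree = n} :=
    Fintype.ofEquiv _ ((Sym.equivNatSum σ n).trans e.symm)
  rw [LinearEquiv.finrank_eq ((LinearEquiv.ofEq _ _
      (homogeneousSubmodule_eq_finsupp_supported σ K n)).trans
    (AddMonoidAlgebra.supportedEquivFinsupp _)), Module.finrank_finsupp_self,
    Fintype.card_congr (e.trans (Sym.equivNatSum σ n).symm), Sym.card_sym_eq_multichoose]

variable [CharZero K] {L : MvPolynomial σ K →ₗ[K] MvPolynomial σ K} {r : MvPolynomial σ K}
  {n k : ℕ}

lemma surjective_restrict_of_fischerForm_adjoint (hr0 : r ≠ 0) (hr : r.IsHomogeneous k)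
    (hadj : ∀ p q, fischerForm (L p) q = fischerForm p (r * q))
    (hL : ∀ p ∈ homogeneousSubmodule σ K (n + k), L p ∈ homogeneousSubmodule σ K n) :
    Function.Surjective (L.restrict hL) := by
  let mulR : homogeneousSubmodule σ K n →ₗ[K] homogeneousSubmodule σ K (n + k) :=
    (LinearMap.mulLeft K r).restrict fun q hq => by
      rw [add_comm]; exact hr.mul ((mem_homogeneousSubmodule n q).mp hq)
  have hmulR : Function.Injective mulR := fun q q' h => Subtype.ext <|
    mul_left_cancel₀ hr0 (congrArg Subtype.val h)
  have hB := fischerForm_restrict_homogeneous_nondegenerate (σ := σ) (K := K)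
  let dualN := (fischerForm.restrict _).toDual (hB n)
  let dualNK := (fischerForm.restrict _).toDual (hB (n + k))
  have key : dualN.toLinearMap ∘ₗ L.restrict hL = mulR.dualMap ∘ₗ dualNK.toLinearMap := by
    ext p q
    exact hadj p q
  have hsurj : Function.Surjective (dualN.toLinearMap ∘ₗ L.restrict hL) := by
    rw [key, LinearMap.coe_comp]
    exact (LinearMap.dualMap_surjective_of_injective hmulR).comp dualNK.surjective
  intro q
  obtain ⟨p, hp⟩ := hsurj (dualN q)
  exact ⟨p, dualN.injective hp⟩

lemma finrank_homogeneousSubmodule_inf_ker_add (hr0 : r ≠ 0) (hr : r.IsHomogeneous k)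
    (hadj : ∀ p q, fischerForm (L p) q = fischerForm p (r * q))
    (hL : ∀ p ∈ homogeneousSubmodule σ K (n + k), L p ∈ homogeneousSubmodule σ K n) :
    Module.finrank K ↥(homogeneousSubmodule σ K (n + k) ⊓ LinearMap.ker L) +
      Module.finrank K (homogeneousSubmodule σ K n) =
      Module.finrank K (homogeneousSubmodule σ K (n + k)) := by
  have h := LinearMap.finrank_range_add_finrank_ker (L.restrict hL)
  rw [LinearMap.range_eq_top.mpr (surjective_restrict_of_fischerForm_adjoint hr0 hr hadj hL),
    finrank_top, LinearMap.ker_restrict, ← Submodule.finrank_map_subtype_eq,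
    Submodule.map_comap_subtype] at h
  omega

end Field

end MvPolynomial

abbrev Idx.of (a b : Fin 4) (h : a < b := by decide) : Idx := ⟨(a, b), h⟩

lemma Lap_apply (p : Pol) :
    Lap p = (2 : ℂ) • (pderiv (Idx.of 0 1) (pderiv (Idx.of 2 3) p)
      - pderiv (Idx.of 0 2) (pderiv (Idx.of 1 3) p)
      + pderiv (Idx.of 0 3) (pderiv (Idx.of 1 2) p)) := by
  simp [Lap, D]

lemma r2_eq : r2 = (2 : ℂ) • (X (Idx.of 0 1) * X (Idx.of 2 3) - X (Idx.of 0 2) * X (Idx.of 1 3)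
    + X (Idx.of 0 3) * X (Idx.of 1 2)) := by
  simp [r2, Z]

lemma fischerForm_Lap (p q : Pol) : fischerForm (Lap p) q = fischerForm p (r2 * q) := by
  have hr2q : r2 * q = (2 : ℂ) • (X (Idx.of 2 3) * (X (Idx.of 0 1) * q)
      - X (Idx.of 1 3) * (X (Idx.of 0 2) * q) + X (Idx.of 1 2) * (X (Idx.of 0 3) * q)) := by
    rw [r2_eq, smul_mul_assoc]
    congr 1
    ring
  rw [Lap_apply, hr2q]
  simp only [map_smul, map_add, map_sub, LinearMap.smul_apply, LinearMap.add_apply,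
    LinearMap.sub_apply, fischerForm_pderiv]

lemma Lap_mem_homogeneousSubmodule {n : ℕ} {p : Pol}
    (hp : p ∈ homogeneousSubmodule Idx ℂ (n + 2)) :
    Lap p ∈ homogeneousSubmodule Idx ℂ n := by
  have h : ∀ i j, pderiv i (pderiv j p) ∈ homogeneousSubmodule Idx ℂ n := fun i j =>
    ((mem_homogeneousSubmodule _ p).mp hp).pderiv.pderiv
  rw [Lap_apply]
  exact Submodule.smul_mem _ _ (add_mem (sub_mem (h _ _) (h _ _)) (h _ _))

lemma Hm_eq_homogeneousSubmodule_of_le_one {m : ℕ} (hm : m ≤ 1) :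
    Hm m = homogeneousSubmodule Idx ℂ m := by
  refine inf_eq_left.mpr fun p hp => ?_
  have h : ∀ i j, pderiv i (pderiv j p) = 0 := fun i j =>
    pderiv_eq_zero_of_isHomogeneous_zero i
      (Nat.sub_eq_zero_of_le hm ▸ ((mem_homogeneousSubmodule _ p).mp hp).pderiv)
  rw [LinearMap.mem_ker, Lap_apply, h, h, h, sub_zero, add_zero, smul_zero]

lemma r2_isHomogeneous : r2.IsHomogeneous 2 := by
  have h : ∀ i j : Idx, (X i * X j : Pol) ∈ homogeneousSubmodule Idx ℂ 2 := fun i j =>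
    (isHomogeneous_X ℂ i).mul (isHomogeneous_X ℂ j)
  rw [← mem_homogeneousSubmodule, r2_eq]
  exact Submodule.smul_mem _ _ (add_mem (sub_mem (h _ _) (h _ _)) (h _ _))

lemma r2_ne_zero : r2 ≠ 0 := by
  intro h
  have := congrArg (eval fun i => if i = Idx.of 0 1 ∨ i = Idx.of 2 3 then (1 : ℂ) else 0) h
  simp [r2_eq] at this

lemma card_Idx : Fintype.card Idx = 6 := by decide

lemma multichoose_six (m : ℕ) :
    120 * Nat.multichoose 6 m = (m + 1) * (m + 2) * (m + 3) * (m + 4) * (m + 5) := by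
  rw [Nat.multichoose_eq, show 6 + m - 1 = m + 5 by omega, Nat.choose_symm_add,
    show 120 = Nat.factorial 5 from rfl, ← Nat.ascFactorial_eq_factorial_mul_choose]
  simp only [Nat.ascFactorial_succ, Nat.ascFactorial_zero]
  ring

lemma finrank_Hm_add_two (k : ℕ) :
    Module.finrank ℂ (Hm (k + 2)) + Nat.multichoose 6 k = Nat.multichoose 6 (k + 2) := by
  have h := finrank_homogeneousSubmodule_inf_ker_add r2_ne_zero r2_isHomogeneous fischerForm_Lap
    fun p hp => Lap_mem_homogeneousSubmodule (n := k) hp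
  rwa [finrank_homogeneousSubmodule, finrank_homogeneousSubmodule, card_Idx] at h

/-- `dim H_m = (m+1)(m+2)²(m+3)/12`. -/
theorem finrank_Hm (m : ℕ) :
    Module.finrank ℂ (Hm m) = (m + 1) * (m + 2) ^ 2 * (m + 3) / 12 := by
  rcases Nat.lt_or_ge m 2 with hm | hm
  · rw [Hm_eq_homogeneousSubmodule_of_le_one (by omega), finrank_homogeneousSubmodule, card_Idx]
    interval_cases m <;> simp [Nat.multichoose_eq]
  · obtain ⟨k, rfl⟩ := Nat.exists_eq_add_of_le' hm
    have h := finrank_Hm_add_two k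
    have hk := multichoose_six k
    have hk2 := multichoose_six (k + 2)
    refine (Nat.div_eq_of_eq_mul_left (by norm_num) ?_).symm
    nlinarith
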